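/- arXiv:2503.20632 — 3 statements merged into one kernel-verified Lean document; each statement's English description precedes it below -/
import Mathlib

section
/- If (r*, i*, s*, c*) with all coordinates real is a steady state of the brisc system with γ > 0 and β > 0, then i* ≠ 0, r* = γ/(β i*), i* satisfies α_i(1 - i*/N_i) = γ/i* (so i* = N_i/2 ± sqrt(N_i²/4 - γ N_i/α_i)), s* satisfies α_s s*(1 - s*/N_s) = -γ (so s* = N_s/2 ± sqrt(N_s²/4 + γ N_s/α_s)), and c* = 0 or c* = N_c(1 - s*/α_c). In particular there are at most twelve steady states. -/
/-- A steady state of the brisc system. -/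
def briscSteady (γ β αi αs αc Ni Ns Nc r i s c : ℝ) : Prop :=
  γ - β * r * i = 0 ∧
  αi * i * (1 - i / Ni) - β * r * i = 0 ∧
  β * r * i + αs * s * (1 - s / Ns) = 0 ∧
  αc * c * (1 - c / Nc) - s * c = 0

private lemma sqrt_char (x m D : ℝ) (h : (x - m) ^ 2 = D) :
    x = m + Real.sqrt D ∨ x = m - Real.sqrt D := by
  have hD : Real.sqrt D = |x - m| := by rw [← h]; exact Real.sqrt_sq_eq_abs _
  rcases abs_cases (x - m) with ⟨h1, _⟩ | ⟨h1, _⟩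
  · left; rw [hD, h1]; ring
  · right; rw [hD, h1]; ring

/-- Characterization of all real steady states of the brisc system and the bound that
there are at most twelve of them. -/
theorem brisc_steady_states_characterization_and_at_most_twelve
    (γ β αi αs αc Ni Ns Nc : ℝ)
    (hγ : 0 < γ) (hβ : 0 < β) (hαi : 0 < αi) (hαs : 0 < αs) (hαc : 0 < αc)
    (hNi : 0 < Ni) (hNs : 0 < Ns) (hNc : 0 < Nc) :
    (∀ r i s c : ℝ, briscSteady γ β αi αs αc Ni Ns Nc r i s c →
      i ≠ 0 ∧ r = γ / (β * i) ∧
      αi * (1 - i / Ni) = γ / i ∧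
      (i = Ni / 2 + Real.sqrt (Ni ^ 2 / 4 - γ * Ni / αi) ∨
       i = Ni / 2 - Real.sqrt (Ni ^ 2 / 4 - γ * Ni / αi)) ∧
      αs * s * (1 - s / Ns) = -γ ∧
      (s = Ns / 2 + Real.sqrt (Ns ^ 2 / 4 + γ * Ns / αs) ∨
       s = Ns / 2 - Real.sqrt (Ns ^ 2 / 4 + γ * Ns / αs)) ∧
      (c = 0 ∨ c = Nc * (1 - s / αc))) ∧
    {p : ℝ × ℝ × ℝ × ℝ |
      briscSteady γ β αi αs αc Ni Ns Nc p.1 p.2.1 p.2.2.1 p.2.2.2}.Finite ∧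
    {p : ℝ × ℝ × ℝ × ℝ |
      briscSteady γ β αi αs αc Ni Ns Nc p.1 p.2.1 p.2.2.1 p.2.2.2}.ncard ≤ 12 := by
  have hchar : ∀ r i s c : ℝ, briscSteady γ β αi αs αc Ni Ns Nc r i s c →
      i ≠ 0 ∧ r = γ / (β * i) ∧
      αi * (1 - i / Ni) = γ / i ∧
      (i = Ni / 2 + Real.sqrt (Ni ^ 2 / 4 - γ * Ni / αi) ∨
       i = Ni / 2 - Real.sqrt (Ni ^ 2 / 4 - γ * Ni / αi)) ∧
      αs * s * (1 - s / Ns) = -γ ∧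
      (s = Ns / 2 + Real.sqrt (Ns ^ 2 / 4 + γ * Ns / αs) ∨
       s = Ns / 2 - Real.sqrt (Ns ^ 2 / 4 + γ * Ns / αs)) ∧
      (c = 0 ∨ c = Nc * (1 - s / αc)) := by
    intro r i s c ⟨h1, h2, h3, h4⟩
    have hi : i ≠ 0 := by
      intro h0
      rw [h0] at h1
      simp at h1
      linarith
    have hr : r = γ / (β * i) := by
      field_simp
      linarith
    have hA : αi * i * (1 - i / Ni) = γ := by linarith
    have hA1 : αi * i * (Ni - i) = γ * Ni := by
      have h := hA; field_simp at h; linarith [h]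
    have hchar_i : αi * (1 - i / Ni) = γ / i := by
      rw [eq_div_iff hi]
      linear_combination hA
    have hqi : (i - Ni / 2) ^ 2 = Ni ^ 2 / 4 - γ * Ni / αi := by
      have h6 : αi * (γ * Ni / αi) = γ * Ni := by field_simp
      have h5 : αi * (i - Ni / 2) ^ 2 = αi * (Ni ^ 2 / 4) - αi * (γ * Ni / αi) := by
        rw [h6]; linear_combination -hA1
      exact mul_left_cancel₀ hαi.ne' (by linear_combination h5)
    have hS : αs * s * (1 - s / Ns) = -γ := by linarith
    have hS1 : αs * s * (Ns - s) = -(γ * Ns) := by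
      have h := hS; field_simp at h; linarith [h]
    have hqs : (s - Ns / 2) ^ 2 = Ns ^ 2 / 4 + γ * Ns / αs := by
      have h6 : αs * (γ * Ns / αs) = γ * Ns := by field_simp
      have h5 : αs * (s - Ns / 2) ^ 2 = αs * (Ns ^ 2 / 4) + αs * (γ * Ns / αs) := by
        rw [h6]; linear_combination -hS1
      exact mul_left_cancel₀ hαs.ne' (by linear_combination h5)
    have hc : c = 0 ∨ c = Nc * (1 - s / αc) := by
      have hcc : c * (αc * (1 - c / Nc) - s) = 0 := by linear_combination h4
      rcases mul_eq_zero.mp hcc with h | h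
      · left; exact h
      · right
        have h3 : αc * (Nc - c) = s * Nc := by
          have h' : αc * (1 - c / Nc) = s := by linarith
          field_simp at h'; linarith [h']
        have h8 : αc * (Nc * (1 - s / αc)) = αc * Nc - Nc * s := by
          field_simp
        exact mul_left_cancel₀ hαc.ne' (by rw [h8]; linear_combination -h3)
    exact ⟨hi, hr, hchar_i, sqrt_char i (Ni / 2) _ hqi, hS,
      sqrt_char s (Ns / 2) _ hqs, hc⟩
  set ip := Ni / 2 + Real.sqrt (Ni ^ 2 / 4 - γ * Ni / αi) with hip
  set im := Ni / 2 - Real.sqrt (Ni ^ 2 / 4 - γ * Ni / αi) with him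
  set sp := Ns / 2 + Real.sqrt (Ns ^ 2 / 4 + γ * Ns / αs) with hsp
  set sm := Ns / 2 - Real.sqrt (Ns ^ 2 / 4 + γ * Ns / αs) with hsm
  set T : Set (ℝ × ℝ × ℝ × ℝ) :=
    insert (γ / (β * ip), ip, sp, (0:ℝ)) (
    insert (γ / (β * ip), ip, sp, Nc * (1 - sp / αc)) (
    insert (γ / (β * ip), ip, sm, (0:ℝ)) (
    insert (γ / (β * ip), ip, sm, Nc * (1 - sm / αc)) (
    insert (γ / (β * im), im, sp, (0:ℝ)) (
    insert (γ / (β * im), im, sp, Nc * (1 - sp / αc)) (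
    insert (γ / (β * im), im, sm, (0:ℝ)) (
    ({(γ / (β * im), im, sm, Nc * (1 - sm / αc))} : Set (ℝ × ℝ × ℝ × ℝ)))))))))
    with hT
  have hTfin : T.Finite := by
    rw [hT]
    exact (Set.finite_singleton _).insert _ |>.insert _ |>.insert _ |>.insert _
      |>.insert _ |>.insert _ |>.insert _
  have hsub : {p : ℝ × ℝ × ℝ × ℝ |
      briscSteady γ β αi αs αc Ni Ns Nc p.1 p.2.1 p.2.2.1 p.2.2.2} ⊆ T := by
    rintro ⟨r, i, s, c⟩ hp
    obtain ⟨hi0, hr, _, hi2, _, hs2, hc2⟩ := hchar r i s c hp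
    subst hr
    rw [Set.mem_setOf_eq] at hp
    show _ ∈ T
    rw [hT]
    rcases hi2 with hi | hi <;> subst hi <;>
      rcases hs2 with hs | hs <;> subst hs <;>
      rcases hc2 with hc | hc <;> subst hc
    · exact Set.mem_insert _ _
    · exact Set.mem_insert_of_mem _ (Set.mem_insert _ _)
    · exact Set.mem_insert_of_mem _ (Set.mem_insert_of_mem _ (Set.mem_insert _ _))
    · exact Set.mem_insert_of_mem _ (Set.mem_insert_of_mem _ (Set.mem_insert_of_mem _
        (Set.mem_insert _ _)))
    · exact Set.mem_insert_of_mem _ (Set.mem_insert_of_mem _ (Set.mem_insert_of_mem _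
        (Set.mem_insert_of_mem _ (Set.mem_insert _ _))))
    · exact Set.mem_insert_of_mem _ (Set.mem_insert_of_mem _ (Set.mem_insert_of_mem _
        (Set.mem_insert_of_mem _ (Set.mem_insert_of_mem _ (Set.mem_insert _ _)))))
    · exact Set.mem_insert_of_mem _ (Set.mem_insert_of_mem _ (Set.mem_insert_of_mem _
        (Set.mem_insert_of_mem _ (Set.mem_insert_of_mem _ (Set.mem_insert_of_mem _
        (Set.mem_insert _ _))))))
    · exact Set.mem_insert_of_mem _ (Set.mem_insert_of_mem _ (Set.mem_insert_of_mem _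
        (Set.mem_insert_of_mem _ (Set.mem_insert_of_mem _ (Set.mem_insert_of_mem _
        (Set.mem_insert_of_mem _ rfl))))))
  have hcard : T.ncard ≤ 12 := by
    rw [hT]
    refine (Set.ncard_insert_le _ _).trans (Nat.add_le_add_right ?_ 1)
    refine (Set.ncard_insert_le _ _).trans (Nat.add_le_add_right ?_ 1)
    refine (Set.ncard_insert_le _ _).trans (Nat.add_le_add_right ?_ 1)
    refine (Set.ncard_insert_le _ _).trans (Nat.add_le_add_right ?_ 1)
    refine (Set.ncard_insert_le _ _).trans (Nat.add_le_add_right ?_ 1)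
    refine (Set.ncard_insert_le _ _).trans (Nat.add_le_add_right ?_ 1)
    refine (Set.ncard_insert_le _ _).trans (Nat.add_le_add_right ?_ 1)
    rw [Set.ncard_singleton]
    norm_num
  exact ⟨hchar, hTfin.subset hsub, (Set.ncard_le_ncard hsub hTfin).trans hcard⟩
end

section
/- Suppose all parameters of the brisc system are positive and N_i ≥ 4γ/α_i. Let s* = N_s/2 + sqrt(N_s²/4 + γ N_s/α_s). If α_c ≤ s*, then every steady state of the brisc system lying in the nonnegative orthant of ℝ⁴ has c* = 0, i.e., there is no steady state with strictly positive cancer density. -/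
lemma eq_half_add_sqrt_of_sq_sub_mul_eq {b q s : ℝ} (hq : 0 < q) (hs : 0 ≤ s)
    (h : s ^ 2 - b * s = q) : s = b / 2 + √(b ^ 2 / 4 + q) := by
  have hvertex : 0 ≤ s - b / 2 := by nlinarith
  have hsqrt : √(b ^ 2 / 4 + q) = s - b / 2 :=
    (Real.sqrt_eq_iff_eq_sq (by positivity) hvertex).2 (by linear_combination -h)
  linarith

lemma eq_half_add_sqrt_of_add_logistic_eq_zero {γ α N s : ℝ} (hγ : 0 < γ) (hα : 0 < α) (hN : 0 < N)
    (hs : 0 ≤ s) (h : γ + α * s * (1 - s / N) = 0) :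
    s = N / 2 + √(N ^ 2 / 4 + γ * N / α) := by
  refine eq_half_add_sqrt_of_sq_sub_mul_eq (by positivity) hs ?_
  field_simp at h ⊢
  linear_combination -h

lemma eq_zero_of_logistic_sub_mul_eq_zero {α N s c : ℝ} (hα : 0 < α) (hN : 0 < N)
    (hc : 0 ≤ c) (hαs : α ≤ s) (h : α * c * (1 - c / N) - s * c = 0) : c = 0 := by
  have hfactor : c * (α * c / N + (s - α)) = 0 := by linear_combination -h
  rcases mul_eq_zero.1 hfactor with hc0 | hrate
  · exact hc0
  · have : 0 ≤ α * c / N := by positivity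
    have : α * c / N = 0 := by linarith
    simpa [hα.ne', hN.ne'] using this

theorem brisc_no_positive_cancer_steady_state_general
    (γ β αi αs αc Ni Ns Nc : ℝ)
    (hγ : 0 < γ) (hαs : 0 < αs) (hαc : 0 < αc)
    (hNs : 0 < Ns) (hNc : 0 < Nc)
    (hαcle : αc ≤ Ns / 2 + Real.sqrt (Ns ^ 2 / 4 + γ * Ns / αs)) :
    ∀ r i s c : ℝ, 0 ≤ r → 0 ≤ i → 0 ≤ s → 0 ≤ c →
      briscSteady γ β αi αs αc Ni Ns Nc r i s c → c = 0 := by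
  rintro r i s c - - hs hc ⟨hr, -, hs_eq, hc_eq⟩
  have hs_star : s = Ns / 2 + √(Ns ^ 2 / 4 + γ * Ns / αs) :=
    eq_half_add_sqrt_of_add_logistic_eq_zero hγ hαs hNs hs (by linear_combination hs_eq + hr)
  exact eq_zero_of_logistic_sub_mul_eq_zero hαc hNc hc (hs_star ▸ hαcle) hc_eq

/-- If `Ni ≥ 4γ/αi` and `αc ≤ s* = Ns/2 + √(Ns²/4 + γNs/αs)`, then every steady
state of the brisc system in the nonnegative orthant has zero cancer density. -/
theorem brisc_no_positive_cancer_steady_state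
    (γ β αi αs αc Ni Ns Nc : ℝ)
    (hγ : 0 < γ) (hβ : 0 < β) (hαi : 0 < αi) (hαs : 0 < αs) (hαc : 0 < αc)
    (hNi : 0 < Ni) (hNs : 0 < Ns) (hNc : 0 < Nc)
    (hfold : Ni ≥ 4 * γ / αi)
    (hαcle : αc ≤ Ns / 2 + Real.sqrt (Ns ^ 2 / 4 + γ * Ns / αs)) :
    ∀ r i s c : ℝ, 0 ≤ r → 0 ≤ i → 0 ≤ s → 0 ≤ c →
      briscSteady γ β αi αs αc Ni Ns Nc r i s c → c = 0 :=
  brisc_no_positive_cancer_steady_state_general γ β αi αs αc Ni Ns Nc hγ hαs hαc hNs hNc hαcle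
end

section
/- For the brisc system restricted to the nonnegative orthant with all parameters positive, there are at most four steady states, given by r* = γ/(β i*), i*± = N_i/2 ± sqrt(N_i²/4 - γ N_i/α_i), s* = N_s/2 + sqrt(N_s²/4 + γ N_s/α_s), and c* ∈ {0, N_c(1 - s*/α_c)}. -/
lemma sqrt_gt_half (Ns γ αs : ℝ) (hNs : 0 < Ns) (hγ : 0 < γ) (hαs : 0 < αs) :
    Ns / 2 < Real.sqrt (Ns ^ 2 / 4 + γ * Ns / αs) := by
  have h0 : Ns / 2 = Real.sqrt ((Ns / 2) ^ 2) := (Real.sqrt_sq (by positivity)).symm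
  rw [h0]
  apply Real.sqrt_lt_sqrt (by positivity)
  have : 0 < γ * Ns / αs := by positivity
  nlinarith

set_option maxHeartbeats 2000000 in
/-- In the nonnegative orthant, the brisc system has at most four steady states, of
the form `r = γ/(β i)`, `i = Ni/2 ± √(Ni²/4 - γNi/αi)`,
`s = Ns/2 + √(Ns²/4 + γNs/αs)`, `c ∈ {0, Nc(1 - s/αc)}`. -/
theorem brisc_at_most_four_nonneg_steady_states
    (γ β αi αs αc Ni Ns Nc : ℝ)
    (hγ : 0 < γ) (hβ : 0 < β) (hαi : 0 < αi) (hαs : 0 < αs) (hαc : 0 < αc)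
    (hNi : 0 < Ni) (hNs : 0 < Ns) (hNc : 0 < Nc) :
    (∀ r i s c : ℝ, 0 ≤ r → 0 ≤ i → 0 ≤ s → 0 ≤ c →
      briscSteady γ β αi αs αc Ni Ns Nc r i s c →
      r = γ / (β * i) ∧
      (i = Ni / 2 + Real.sqrt (Ni ^ 2 / 4 - γ * Ni / αi) ∨
       i = Ni / 2 - Real.sqrt (Ni ^ 2 / 4 - γ * Ni / αi)) ∧
      s = Ns / 2 + Real.sqrt (Ns ^ 2 / 4 + γ * Ns / αs) ∧
      (c = 0 ∨ c = Nc * (1 - s / αc))) ∧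
    {p : ℝ × ℝ × ℝ × ℝ |
      (0 ≤ p.1 ∧ 0 ≤ p.2.1 ∧ 0 ≤ p.2.2.1 ∧ 0 ≤ p.2.2.2) ∧
      briscSteady γ β αi αs αc Ni Ns Nc p.1 p.2.1 p.2.2.1 p.2.2.2}.ncard ≤ 4 := by
  have main : ∀ r i s c : ℝ, 0 ≤ r → 0 ≤ i → 0 ≤ s → 0 ≤ c →
      briscSteady γ β αi αs αc Ni Ns Nc r i s c →
      r = γ / (β * i) ∧
      (i = Ni / 2 + Real.sqrt (Ni ^ 2 / 4 - γ * Ni / αi) ∨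
       i = Ni / 2 - Real.sqrt (Ni ^ 2 / 4 - γ * Ni / αi)) ∧
      s = Ns / 2 + Real.sqrt (Ns ^ 2 / 4 + γ * Ns / αs) ∧
      (c = 0 ∨ c = Nc * (1 - s / αc)) := by
    intro r i s c hr hi hs hc hst
    obtain ⟨e1, e2, e3, e4⟩ := hst
    have hine : i ≠ 0 := by
      rintro rfl; simp at e1; linarith
    have hbi : β * i ≠ 0 := by
      exact mul_ne_zero (ne_of_gt hβ) hine
    have hr' : r = γ / (β * i) := by
      field_simp
      linarith [e1]
    have hisq : (i - Ni / 2) ^ 2 = Ni ^ 2 / 4 - γ * Ni / αi := by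
      have h2 : αi * i * (1 - i / Ni) = γ := by linarith
      field_simp at h2 ⊢
      nlinarith [h2]
    have hsqrt_i : Real.sqrt (Ni ^ 2 / 4 - γ * Ni / αi) = |i - Ni / 2| := by
      rw [← hisq, Real.sqrt_sq_eq_abs]
    have hi' : i = Ni / 2 + Real.sqrt (Ni ^ 2 / 4 - γ * Ni / αi) ∨
        i = Ni / 2 - Real.sqrt (Ni ^ 2 / 4 - γ * Ni / αi) := by
      rcases abs_cases (i - Ni / 2) with ⟨h, _⟩ | ⟨h, _⟩
      · left; rw [hsqrt_i, h]; ring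
      · right; rw [hsqrt_i, h]; ring
    have hssq : (s - Ns / 2) ^ 2 = Ns ^ 2 / 4 + γ * Ns / αs := by
      have h3 : αs * s * (1 - s / Ns) = -γ := by linarith
      field_simp at h3 ⊢
      nlinarith [h3]
    have hsqrt_s : Real.sqrt (Ns ^ 2 / 4 + γ * Ns / αs) = |s - Ns / 2| := by
      rw [← hssq, Real.sqrt_sq_eq_abs]
    have hs' : s = Ns / 2 + Real.sqrt (Ns ^ 2 / 4 + γ * Ns / αs) := by
      have hlt2 : Ns / 2 < Real.sqrt (Ns ^ 2 / 4 + γ * Ns / αs) :=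
        sqrt_gt_half Ns γ αs hNs hγ hαs
      rcases abs_cases (s - Ns / 2) with ⟨h, _⟩ | ⟨h, _⟩
      · rw [hsqrt_s, h]; ring
      · exfalso
        rw [hsqrt_s, h] at hlt2
        linarith
    have hc' : c = 0 ∨ c = Nc * (1 - s / αc) := by
      rcases eq_or_ne c 0 with h | h
      · exact Or.inl h
      · right
        have hfac : c * (αc * (1 - c / Nc) - s) = 0 := by linarith [e4]; 
        have h4 : αc * (1 - c / Nc) - s = 0 := by
          rcases mul_eq_zero.mp hfac with h' | h'
          · exact absurd h' h
          · exact h'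
        field_simp at h4 ⊢
        nlinarith [h4]
    exact ⟨hr', hi', hs', hc'⟩
  refine ⟨main, ?_⟩
  set d := Real.sqrt (Ni ^ 2 / 4 - γ * Ni / αi) with hd
  set s0 := Ns / 2 + Real.sqrt (Ns ^ 2 / 4 + γ * Ns / αs) with hs0
  set i1 := Ni / 2 + d with hi1
  set i2 := Ni / 2 - d with hi2
  set c1 := Nc * (1 - s0 / αc) with hc1
  have hsub : {p : ℝ × ℝ × ℝ × ℝ |
      (0 ≤ p.1 ∧ 0 ≤ p.2.1 ∧ 0 ≤ p.2.2.1 ∧ 0 ≤ p.2.2.2) ∧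
      briscSteady γ β αi αs αc Ni Ns Nc p.1 p.2.1 p.2.2.1 p.2.2.2} ⊆
      {(γ / (β * i1), i1, s0, 0), (γ / (β * i1), i1, s0, c1),
       (γ / (β * i2), i2, s0, 0), (γ / (β * i2), i2, s0, c1)} := by
    rintro ⟨r, i, s, c⟩ ⟨⟨h1, h2, h3, h4⟩, hst⟩
    obtain ⟨hr, hi, hs, hc⟩ := main r i s c h1 h2 h3 h4 hst
    simp only [Set.mem_insert_iff, Set.mem_singleton_iff, Prod.mk.injEq]
    rcases hi with hi | hi <;> rcases hc with hc | hc
    · exact Or.inl ⟨by rw [hr, hi], hi, hs, hc⟩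
    · exact Or.inr (Or.inl ⟨by rw [hr, hi], hi, hs, by rw [hc, hs]⟩)
    · exact Or.inr (Or.inr (Or.inl ⟨by rw [hr, hi], hi, hs, hc⟩))
    · exact Or.inr (Or.inr (Or.inr ⟨by rw [hr, hi], hi, hs, by rw [hc, hs]⟩))
  have hfin : ({(γ / (β * i1), i1, s0, 0), (γ / (β * i1), i1, s0, c1),
       (γ / (β * i2), i2, s0, 0), (γ / (β * i2), i2, s0, c1)} :
       Set (ℝ × ℝ × ℝ × ℝ)).Finite := by
    apply Set.Finite.insert; apply Set.Finite.insert; apply Set.Finite.insert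
    exact Set.finite_singleton _
  have h1 := Set.ncard_le_ncard hsub hfin
  have h2 : ({(γ / (β * i1), i1, s0, 0), (γ / (β * i1), i1, s0, c1),
       (γ / (β * i2), i2, s0, 0), (γ / (β * i2), i2, s0, c1)} :
       Set (ℝ × ℝ × ℝ × ℝ)).ncard ≤ 4 := by
    apply le_trans (Set.ncard_insert_le _ _)
    have h3 := Set.ncard_insert_le (γ / (β * i1), i1, s0, c1)
      ({(γ / (β * i2), i2, s0, 0), (γ / (β * i2), i2, s0, c1)} : Set (ℝ × ℝ × ℝ × ℝ))
    have h4 := Set.ncard_insert_le (γ / (β * i2), i2, s0, 0)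
      ({(γ / (β * i2), i2, s0, c1)} : Set (ℝ × ℝ × ℝ × ℝ))
    have h5 : ({(γ / (β * i2), i2, s0, c1)} : Set (ℝ × ℝ × ℝ × ℝ)).ncard = 1 :=
      Set.ncard_singleton _
    omega
  omega
end
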